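/- arXiv:2305.11428 — 2 statements merged into one kernel-verified Lean document; each statement's English description precedes it below -/
import Mathlib

section
/- Let c ≥ 2 be an integer and let G be a finite simple undirected graph on a vertex set V of size n in which every vertex has degree at least n/c − 1 (i.e., c·(deg(v) + 1) ≥ n for every vertex v). Then for every subset S ⊆ V with 1 ≤ |S| ≤ n/c − 1 (i.e., S ≠ ∅ and c·(|S| + 1) ≤ n), the number of edges of G crossing the cut determined by S satisfies |edges_G(S)| ≥ n/c − 1 (i.e., c·(|edges_G(S)| + 1) ≥ n). -/
open Finset

/-- Number of edges of `G` with one endpoint in `S` and the other in `T`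
(for disjoint `S`, `T`, each such edge is counted exactly once as an ordered pair). -/
def crossEdges {V : Type*} [Fintype V] [DecidableEq V] (G : SimpleGraph V)
    [DecidableRel G.Adj] (S T : Finset V) : ℕ :=
  ((S ×ˢ T).filter fun p => G.Adj p.1 p.2).card

/-- Number of edges of `G` with exactly one endpoint in `S`. -/
def cutEdges {V : Type*} [Fintype V] [DecidableEq V] (G : SimpleGraph V)
    [DecidableRel G.Adj] (S : Finset V) : ℕ :=
  crossEdges G S Sᶜ

theorem crossEdges_eq_sum {V : Type*} [Fintype V] [DecidableEq V] (G : SimpleGraph V)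
    [DecidableRel G.Adj] (S T : Finset V) :
    crossEdges G S T = ∑ v ∈ S, (T.filter (G.Adj v)).card := by
  have h : (S ×ˢ T).filter (fun p => G.Adj p.1 p.2)
      = S.biUnion (fun v => (T.filter (G.Adj v)).image (Prod.mk v)) := by
    ext ⟨a, b⟩
    simp [Finset.mem_biUnion, Finset.mem_filter, Finset.mem_product]
    tauto
  rw [crossEdges, h, Finset.card_biUnion]
  · refine Finset.sum_congr rfl fun v _ => ?_
    exact Finset.card_image_of_injective _ (fun a b h => by simpa using h)
  · intro x hx y hy hxy
    simp only [Finset.disjoint_left, Finset.mem_image]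
    rintro ⟨a, b⟩ ⟨u, hu, h1⟩ ⟨w, hw, h2⟩
    have := congrArg Prod.fst h1; have := congrArg Prod.fst h2; simp_all


/-- if `c ≥ 2` and every vertex of a graph `G` on `n` vertices has degree
at least `n/c − 1` (i.e. `c·(deg v + 1) ≥ n`), then every nonempty `S` with
`|S| ≤ n/c − 1` (i.e. `c·(|S|+1) ≤ n`) satisfies `|edges_G(S)| ≥ n/c − 1`
(i.e. `c·(|edges_G(S)|+1) ≥ n`). -/
theorem stmt1 {V : Type*} [Fintype V] [DecidableEq V] (G : SimpleGraph V)
    [DecidableRel G.Adj] (c : ℕ) (hc : 2 ≤ c)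
    (hdeg : ∀ v : V, Fintype.card V ≤ c * (G.degree v + 1))
    (S : Finset V) (hS : S.Nonempty) (hSsize : c * (S.card + 1) ≤ Fintype.card V) :
    Fintype.card V ≤ c * (cutEdges G S + 1) := by
  obtain ⟨v₀, hv₀⟩ := hS
  have hc0 : 0 < c := by omega
  have hdegS : ∀ v, S.card ≤ G.degree v := by
    intro v
    have h := le_trans hSsize (hdeg v)
    have := Nat.le_of_mul_le_mul_left h hc0
    omega
  -- per-vertex bound: edges from v to Sᶜ
  have key : ∀ v ∈ S, G.degree v + 1 - S.card ≤ (Sᶜ.filter (G.Adj v)).card := by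
    intro v hv
    have h1 : (S.filter (G.Adj v)).card ≤ S.card - 1 := by
      have hsub : S.filter (G.Adj v) ⊆ S.erase v := by
        intro u hu
        simp only [Finset.mem_filter] at hu
        exact Finset.mem_erase.2 ⟨fun h => G.irrefl (h ▸ hu.2), hu.1⟩
      calc (S.filter (G.Adj v)).card ≤ (S.erase v).card := Finset.card_le_card hsub
        _ = S.card - 1 := Finset.card_erase_of_mem hv
    have h2 : (S.filter (G.Adj v)).card + (Sᶜ.filter (G.Adj v)).card = G.degree v := by
      rw [← Finset.card_union_of_disjoint
        (Finset.disjoint_filter_filter (disjoint_compl_right)),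
        ← Finset.filter_union, Finset.union_compl]
      rw [SimpleGraph.degree, ← SimpleGraph.neighborFinset_eq_filter]
    have := hdegS v
    have hv1 : 1 ≤ S.card := Finset.card_pos.2 ⟨v, hv⟩
    omega
  have hcut : G.degree v₀ ≤ cutEdges G S := by
    rw [cutEdges, crossEdges_eq_sum]
    have hsplit : ∑ v ∈ S, (Sᶜ.filter (G.Adj v)).card
        = (Sᶜ.filter (G.Adj v₀)).card + ∑ v ∈ S.erase v₀, (Sᶜ.filter (G.Adj v)).card :=
      (Finset.add_sum_erase S _ hv₀).symm
    rw [hsplit]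
    have h1 : G.degree v₀ + 1 - S.card ≤ (Sᶜ.filter (G.Adj v₀)).card := key v₀ hv₀
    have h2 : S.card - 1 ≤ ∑ v ∈ S.erase v₀, (Sᶜ.filter (G.Adj v)).card := by
      rw [← Finset.card_erase_of_mem hv₀]
      calc (S.erase v₀).card = ∑ _v ∈ S.erase v₀, 1 := by simp
        _ ≤ _ := Finset.sum_le_sum fun v hv => by
            have := key v (Finset.mem_of_mem_erase hv)
            have := hdegS v
            omega
    have := hdegS v₀
    have hv1 : 1 ≤ S.card := Finset.card_pos.2 ⟨v₀, hv₀⟩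
    omega
  calc Fintype.card V ≤ c * (G.degree v₀ + 1) := hdeg v₀
    _ ≤ c * (cutEdges G S + 1) := Nat.mul_le_mul_left c (by omega)
end

section
/- Let c ≥ 2 be an integer, let G be a finite simple undirected graph on a vertex set V of size n in which every vertex has degree at least n/c − 1, and let α be a natural number satisfying 2^c·α < n/c − 1. Then every equivalence class of the relation ~_α on V has size at least n/c (i.e., c·|U| ≥ n for every class U). -/
open Finset

/-- The equivalence relation `~_α`: `u ~_α v` iff for every `S` with `|edges_G(S)| ≤ α`,
`u ∈ S ↔ v ∈ S`. -/
def cutRel {V : Type*} [Fintype V] [DecidableEq V] (G : SimpleGraph V)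
    [DecidableRel G.Adj] (α : ℕ) (u v : V) : Prop :=
  ∀ S : Finset V, cutEdges G S ≤ α → (u ∈ S ↔ v ∈ S)

instance {V : Type*} [Fintype V] [DecidableEq V] (G : SimpleGraph V)
    [DecidableRel G.Adj] (α : ℕ) (u v : V) : Decidable (cutRel G α u v) :=
  inferInstanceAs (Decidable (∀ S : Finset V, cutEdges G S ≤ α → (u ∈ S ↔ v ∈ S)))

/-- The `~_α`-equivalence class of a vertex `v`. -/
def cutClass {V : Type*} [Fintype V] [DecidableEq V] (G : SimpleGraph V)
    [DecidableRel G.Adj] (α : ℕ) (v : V) : Finset V :=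
  Finset.univ.filter fun u => cutRel G α u v

/-- The set of all `~_α`-equivalence classes. -/
def cutClasses {V : Type*} [Fintype V] [DecidableEq V] (G : SimpleGraph V)
    [DecidableRel G.Adj] (α : ℕ) : Finset (Finset V) :=
  Finset.univ.image (cutClass G α)

/-!
Summing `deg v + 1 ≥ n / c` over a set `S` and splitting each neighbourhood into its parts
inside and outside `S` gives `|S| · n ≤ c · (|S|² + |∂S|)`. Hence a nonempty set with
`c · (c |∂S| + 1) < n` has at least `n / c` vertices, and a set with `1 ≤ |S| ≤ n / c - 1`
has `|∂S| ≥ n / c - 1`.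

The class of `u` is obtained from `V` by repeatedly intersecting with the side of an `α`-cut
that contains `u`. After `i` such cuts the current set `A` has `|∂A| ≤ iα`, and every piece
cut off so far has boundary at most `iα`, hence (as `c(c-1) ≤ 2^c`) size at least `n / c`.
So at most `c - 1` pieces are removed; once `c - 1` have been removed, `A` has at most
`n / c` vertices, and a further cut would split off a set with `1 ≤ |S| ≤ n / c - 1` and
boundary at most `cα < n / c - 1`.
-/

theorem Nat.mul_pred_le_two_pow : ∀ c : ℕ, c * (c - 1) ≤ 2 ^ c
  | 0 | 1 | 2 | 3 => by norm_num
  | c + 4 => by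
    have ih : (c + 3) * (c + 2) ≤ 2 ^ (c + 3) := Nat.mul_pred_le_two_pow (c + 3)
    rw [pow_succ]
    show (c + 4) * (c + 3) ≤ _
    nlinarith

namespace SimpleGraph

variable {V : Type*} [Fintype V] [DecidableEq V] (G : SimpleGraph V) [DecidableRel G.Adj]

theorem crossEdges_eq_card_interedges (S T : Finset V) :
    crossEdges G S T = #(G.interedges S T) := rfl

theorem cutEdges_compl (S : Finset V) : cutEdges G Sᶜ = cutEdges G S := by
  have := G.symm
  rw [cutEdges, cutEdges, compl_compl, crossEdges_eq_card_interedges,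
    crossEdges_eq_card_interedges]
  exact Rel.card_interedges_comm _ _

@[simp]
theorem cutEdges_univ : cutEdges G (univ : Finset V) = 0 := by
  simp [cutEdges, crossEdges]

theorem cutEdges_inter_le (A S : Finset V) :
    cutEdges G (A ∩ S) ≤ cutEdges G A + cutEdges G S := by
  simp only [cutEdges, crossEdges_eq_card_interedges]
  refine (card_le_card fun p hp => ?_).trans (card_union_le _ _)
  simp only [mem_union, mem_interedges_iff, mem_inter, mem_compl] at hp ⊢
  tauto

theorem cutEdges_sdiff_le (A S : Finset V) :
    cutEdges G (A \ S) ≤ cutEdges G A + cutEdges G S := by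
  simpa only [sdiff_eq_inter_compl, cutEdges_compl] using cutEdges_inter_le G A Sᶜ

theorem sum_card_neighborFinset_sdiff (S : Finset V) :
    ∑ v ∈ S, #(G.neighborFinset v \ S) = cutEdges G S := by
  rw [cutEdges, crossEdges, card_filter, sum_product]
  refine sum_congr rfl fun v _ => ?_
  rw [← card_filter]
  congr 1
  ext w
  simp [and_comm]

theorem sum_degree_add_one_le (S : Finset V) :
    ∑ v ∈ S, (G.degree v + 1) ≤ #S * #S + cutEdges G S := by
  rw [← sum_card_neighborFinset_sdiff, ← smul_eq_mul, ← sum_const, ← sum_add_distrib]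
  refine sum_le_sum fun v hv => ?_
  have hinter : #(G.neighborFinset v ∩ S) < #S :=
    card_lt_card ⟨inter_subset_right, fun h => by simpa using h hv⟩
  rw [degree, ← card_inter_add_card_sdiff (G.neighborFinset v) S]
  omega

variable {G} {c α : ℕ}

theorem card_mul_card_le_mul_add_cutEdges
    (hdeg : ∀ v : V, Fintype.card V ≤ c * (G.degree v + 1)) (S : Finset V) :
    #S * Fintype.card V ≤ c * (#S * #S + cutEdges G S) :=
  calc #S * Fintype.card V = ∑ _v ∈ S, Fintype.card V := by rw [sum_const, smul_eq_mul]
    _ ≤ ∑ v ∈ S, c * (G.degree v + 1) := sum_le_sum fun v _ => hdeg v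
    _ ≤ c * (#S * #S + cutEdges G S) := by
      rw [← mul_sum]
      exact Nat.mul_le_mul_left c (G.sum_degree_add_one_le S)

theorem le_mul_card_of_mul_cutEdges_lt (hdeg : ∀ v : V, Fintype.card V ≤ c * (G.degree v + 1))
    {S : Finset V} (hS : S.Nonempty) (hcut : c * (c * cutEdges G S + 1) < Fintype.card V) :
    Fintype.card V ≤ c * #S := by
  have key := card_mul_card_le_mul_add_cutEdges hdeg S
  have hSpos := hS.card_pos
  by_contra! hsmall
  obtain ⟨e, he⟩ : ∃ e, Fintype.card V = c * #S + e + 1 :=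
    ⟨Fintype.card V - c * #S - 1, by omega⟩
  rw [he] at key hcut
  have hboundary : #S * (e + 1) ≤ c * cutEdges G S := by nlinarith
  have hboundary' := Nat.mul_le_mul_left c hboundary
  rcases Nat.eq_zero_or_pos c with rfl | hc
  · rw [zero_mul] at hboundary
    exact (Nat.mul_pos hSpos e.succ_pos).ne' (Nat.le_zero.mp hboundary)
  · have : e ≤ c * #S * e := Nat.le_mul_of_pos_left e (Nat.mul_pos hc hSpos)
    nlinarith

/-- With `t = |S|`, the bound `t · (n - c t) ≤ c · |∂S|` and
`t (n - c t) - (n - c) = (t - 1) (n - c (t + 1)) ≥ 0` give `n - c ≤ c · |∂S|`. -/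
theorem le_mul_cutEdges_add_one (hdeg : ∀ v : V, Fintype.card V ≤ c * (G.degree v + 1))
    {S : Finset V} (hS : S.Nonempty) (hsmall : c * (#S + 1) ≤ Fintype.card V) :
    Fintype.card V ≤ c * (cutEdges G S + 1) := by
  have key := card_mul_card_le_mul_add_cutEdges hdeg S
  obtain ⟨m, hm⟩ := Nat.exists_eq_add_of_le hsmall
  obtain ⟨t, ht⟩ : ∃ t, #S = t + 1 := ⟨_, (Nat.succ_pred_eq_of_pos hS.card_pos).symm⟩
  rw [hm, ht] at key ⊢
  nlinarith

theorem le_mul_card_of_cutEdges_le_mul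
    (hdeg : ∀ v : V, Fintype.card V ≤ c * (G.degree v + 1))
    (hα : c * (2 ^ c * α + 1) < Fintype.card V) {S : Finset V} {j : ℕ} (hj : j < c)
    (hS : S.Nonempty) (hcut : cutEdges G S ≤ j * α) :
    Fintype.card V ≤ c * #S := by
  refine le_mul_card_of_mul_cutEdges_lt hdeg hS (lt_of_le_of_lt ?_ hα)
  have : c * cutEdges G S ≤ 2 ^ c * α :=
    calc c * cutEdges G S ≤ c * ((c - 1) * α) :=
          Nat.mul_le_mul_left c (hcut.trans (Nat.mul_le_mul_right α (by omega)))
      _ ≤ 2 ^ c * α := by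
          rw [← mul_assoc]
          exact Nat.mul_le_mul_right α (Nat.mul_pred_le_two_pow c)
  gcongr

theorem mem_cutClass {u v : V} : u ∈ cutClass G α v ↔ cutRel G α u v := by
  simp [cutClass]

theorem cutClass_subset {S : Finset V} {v : V} (hS : cutEdges G S ≤ α) (hv : v ∈ S) :
    cutClass G α v ⊆ S :=
  fun _ hu => (mem_cutClass.mp hu S hS).mpr hv

theorem exists_separating_of_notMem_cutClass {u w : V} (hw : w ∉ cutClass G α u) :
    ∃ S : Finset V, cutEdges G S ≤ α ∧ u ∈ S ∧ w ∉ S := by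
  obtain ⟨S, hS, hwu⟩ : ∃ S, cutEdges G S ≤ α ∧ ¬(w ∈ S ↔ u ∈ S) := by
    simpa [mem_cutClass, cutRel] using hw
  by_cases huS : u ∈ S
  · exact ⟨S, hS, huS, by tauto⟩
  · refine ⟨Sᶜ, (cutEdges_compl G S).trans_le hS, mem_compl.mpr huS, ?_⟩
    rw [mem_compl, not_not]
    tauto

/-- `i` counts the `α`-cuts intersected so far to reach `A`; `hbudget` records that the `i`
pieces cut off each had at least `n / c` vertices. -/
theorem le_mul_card_cutClass_of_subset
    (hdeg : ∀ v : V, Fintype.card V ≤ c * (G.degree v + 1))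
    (hα : c * (2 ^ c * α + 1) < Fintype.card V) (A : Finset V) {i : ℕ} {u : V} (hu : u ∈ A)
    (hsub : cutClass G α u ⊆ A) (hcut : cutEdges G A ≤ i * α)
    (hbudget : i * Fintype.card V + c * #A ≤ c * Fintype.card V) :
    Fintype.card V ≤ c * #(cutClass G α u) := by
  induction A using Finset.strongInduction generalizing i with
  | H A ih =>
  have hA : 0 < #A := card_pos.mpr ⟨u, hu⟩
  have hc : 0 < c := Nat.pos_of_ne_zero fun h => by
    have := hdeg u
    simp only [h, zero_mul] at this hα
    omega
  have hi : i < c := by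
    refine Nat.lt_of_mul_lt_mul_right (a := Fintype.card V) ?_
    have := Nat.mul_pos hc hA
    omega
  rcases hsub.eq_or_ssubset with heq | hssub
  · rw [heq]
    exact le_mul_card_of_cutEdges_le_mul hdeg hα hi ⟨u, hu⟩ hcut
  obtain ⟨w, hwA, hwu⟩ := exists_of_ssubset hssub
  obtain ⟨S, hS, huS, hwS⟩ := exists_separating_of_notMem_cutClass hwu
  have hcutInter : cutEdges G (A ∩ S) ≤ (i + 1) * α := by
    rw [add_one_mul]
    exact (cutEdges_inter_le G A S).trans (add_le_add hcut hS)
  have hcutDiff : cutEdges G (A \ S) ≤ (i + 1) * α := by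
    rw [add_one_mul]
    exact (cutEdges_sdiff_le G A S).trans (add_le_add hcut hS)
  have hsplit : c * #(A ∩ S) + c * #(A \ S) = c * #A := by
    rw [← mul_add, card_inter_add_card_sdiff]
  have hDiff : (A \ S).Nonempty := ⟨w, mem_sdiff.mpr ⟨hwA, hwS⟩⟩
  have hInter : 0 < #(A ∩ S) := card_pos.mpr ⟨u, mem_inter.mpr ⟨hu, huS⟩⟩
  by_cases hic : i + 1 < c
  · have hlarge := le_mul_card_of_cutEdges_le_mul hdeg hα hic hDiff hcutDiff
    refine ih (A ∩ S) (ssubset_iff_of_subset inter_subset_left |>.mpr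
      ⟨w, hwA, fun h => hwS (mem_inter.mp h).2⟩) (mem_inter.mpr ⟨hu, huS⟩)
      (subset_inter hsub (cutClass_subset hS huS)) hcutInter ?_
    rw [add_one_mul]
    omega
  · have hcA : c * #A ≤ Fintype.card V := by
      have : c * Fintype.card V = i * Fintype.card V + Fintype.card V := by
        rw [← add_one_mul, show i + 1 = c by omega]
      omega
    have hDiffSmall : c * (#(A \ S) + 1) ≤ Fintype.card V := by
      have := Nat.le_mul_of_pos_right c hInter
      rw [mul_add_one]
      omega
    have hcutDiff' : c * (cutEdges G (A \ S) + 1) ≤ c * (2 ^ c * α + 1) := by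
      have : i + 1 ≤ 2 ^ c := by
        have := Nat.lt_two_pow_self (n := c)
        omega
      gcongr
      exact hcutDiff.trans (Nat.mul_le_mul_right α this)
    have := le_mul_cutEdges_add_one hdeg hDiff hDiffSmall
    omega

end SimpleGraph

theorem stmt2_general {V : Type*} [Fintype V] [DecidableEq V] (G : SimpleGraph V)
    [DecidableRel G.Adj] (c α : ℕ)
    (hdeg : ∀ v : V, Fintype.card V ≤ c * (G.degree v + 1))
    (hα : c * (2 ^ c * α + 1) < Fintype.card V) :
    ∀ U ∈ cutClasses G α, Fintype.card V ≤ c * U.card := by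
  intro U hU
  obtain ⟨v, -, rfl⟩ := mem_image.mp hU
  exact SimpleGraph.le_mul_card_cutClass_of_subset hdeg hα univ (i := 0) (mem_univ v)
    (subset_univ _) (by simp) (by simp)

/-- if `c ≥ 2`, every vertex of `G` (on `n` vertices) has degree at least
`n/c − 1`, and `2^c·α < n/c − 1` (i.e. `c·(2^c·α + 1) < n`), then every equivalence
class of `~_α` has size at least `n/c` (i.e. `c·|U| ≥ n`). -/
theorem stmt2 {V : Type*} [Fintype V] [DecidableEq V] (G : SimpleGraph V)
    [DecidableRel G.Adj] (c α : ℕ) (hc : 2 ≤ c)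
    (hdeg : ∀ v : V, Fintype.card V ≤ c * (G.degree v + 1))
    (hα : c * (2 ^ c * α + 1) < Fintype.card V) :
    ∀ U ∈ cutClasses G α, Fintype.card V ≤ c * U.card :=
  stmt2_general G c α hdeg hα
end
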